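/- For every n ≥ 3 and every d ≥ 2 there exists a reduced homaloidal hypersurface in P^n of degree d (i.e., a reduced hypersurface whose polar map is birational). -/

import Mathlib

open MvPolynomial
open scoped LinearAlgebra.Projectivization

/-- The gradient (polar map on the level of vectors) of `f`. -/
noncomputable def polarMapVec {n : ℕ} (f : MvPolynomial (Fin (n+1)) ℂ)
    (v : Fin (n+1) → ℂ) : Fin (n+1) → ℂ :=
  fun i => eval v (pderiv i f)

/-- `f` has polar degree `d` : the fiber of the polar map
`ℙⁿ ⇢ ℙⁿ`, `x ↦ (∂f/∂x₀ : ⋯ : ∂f/∂xₙ)` over a generic point has exactly `d` points. -/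
def HasPolarDegree {n : ℕ} (f : MvPolynomial (Fin (n+1)) ℂ) (d : ℕ) : Prop :=
  ∃ U : Set (Fin (n+1) → ℂ), Dense U ∧ ∀ y ∈ U, y ≠ 0 →
    Nat.card {x : ℙ ℂ (Fin (n+1) → ℂ) | ∃ v : Fin (n+1) → ℂ, ∃ hv : v ≠ 0,
      Projectivization.mk ℂ v hv = x ∧ ∃ c : ℂ, c ≠ 0 ∧ polarMapVec f v = c • y} = d

/-- The zero locus in `ℙⁿ` of a homogeneous polynomial. -/
def projZeroLocus {n : ℕ} (f : MvPolynomial (Fin (n+1)) ℂ) :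
    Set (ℙ ℂ (Fin (n+1) → ℂ)) :=
  {x | eval x.rep f = 0}

/-! Take `f = x₃x₀^(d-1) + x₁^d + x₀^(d-2) (x₁x₂ + ∑_{i ≥ 4} xᵢ²)`. Since `∇f` is homogeneous,
every point of the fibre over `y` with `y₃ ≠ 0` can be normalised to `x₀ = 1`, and there the
equations `∇f(x) = c y` are triangular: `∂₃f = 1` fixes `c`, then `∂₂f`, `∂₁f`, the `∂ᵢf` with
`i ≥ 4` and finally `∂₀f` determine `x₁`, `x₂`, `xᵢ` and `x₃` one after the other. So the fibre is
a single point. The hypersurface is reduced because `∂₃f = x₀^(d-1)` while `x₀ ∤ f`. -/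

open Finset Topology

theorem MvPolynomial.IsHomogeneous.eval_smul {R σ : Type*} [CommSemiring R]
    {φ : MvPolynomial σ R} {n : ℕ} (hφ : φ.IsHomogeneous n) (t : R) (v : σ → R) :
    eval (t • v) φ = t ^ n * eval v φ := by
  conv_lhs => rw [φ.as_sum]
  conv_rhs => rw [φ.as_sum]
  simp only [map_sum, eval_monomial, mul_sum]
  refine sum_congr rfl fun m hm => ?_
  have hdeg : m.sum (fun _ k => k) = n := by
    simpa [Finsupp.weight_apply] using hφ (mem_support_iff.mp hm)
  simp only [Pi.smul_apply, smul_eq_mul, mul_pow, ← hdeg, Finsupp.prod, Finsupp.sum,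
    prod_mul_distrib, prod_pow_eq_pow_sum]
  ring

theorem Function.Embedding.forall_fin_four_iff {σ : Type*} (p : Fin 4 ↪ σ) {P : σ → Prop} :
    (∀ i, P i) ↔ P (p 0) ∧ P (p 1) ∧ P (p 2) ∧ P (p 3) ∧ ∀ i ∉ Set.range p, P i := by
  refine ⟨fun h => ⟨h _, h _, h _, h _, fun i _ => h i⟩, fun ⟨h0, h1, h2, h3, h⟩ i => ?_⟩
  by_cases hi : i ∈ Set.range p
  · obtain ⟨k, rfl⟩ := hi
    match k with
    | 0 => exact h0
    | 1 => exact h1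
    | 2 => exact h2
    | 3 => exact h3
  · exact h i hi

theorem Derivation.dvd_apply_of_mul_self_dvd {R A : Type*} [CommSemiring R] [CommSemiring A]
    [Algebra R A] (D : Derivation R A A) {f g : A} (h : g * g ∣ f) : g ∣ D f := by
  obtain ⟨k, rfl⟩ := h
  rw [D.leibniz, D.leibniz]
  exact Dvd.intro (g * D k + 2 * k * D g) (by simp only [smul_eq_mul]; ring)

theorem Derivation.squarefree_of_apply_eq_prime_pow {R A : Type*} [CommSemiring R] [CommRing A]
    [IsDomain A] [Algebra R A] (D : Derivation R A A) {f q : A} (hq : Prime q) {k : ℕ}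
    (hD : D f = q ^ k) (hqf : ¬q ∣ f) : Squarefree f := by
  intro g hg
  obtain ⟨i, -, hgi⟩ := (dvd_prime_pow hq k).1 (hD ▸ D.dvd_apply_of_mul_self_dvd hg)
  cases i with
  | zero => exact associated_one_iff_isUnit.1 (by simpa using hgi)
  | succ i => exact absurd ((dvd_pow_self q i.succ_ne_zero).trans (hgi.symm.dvd.trans
      ((dvd_mul_right g g).trans hg))) hqf

theorem dense_setOf_apply_ne_zero {ι K : Type*} [TopologicalSpace K] [Zero K]
    [(𝓝[≠] (0 : K)).NeBot] (i : ι) : Dense {y : ι → K | y i ≠ 0} :=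
  (dense_compl_singleton 0).preimage (isOpenMap_eval i)

section HomaloidalPoly

variable {K σ : Type*} [Field K] [Fintype σ] [DecidableEq σ] (p : Fin 4 ↪ σ) (e : ℕ)

/-- `p 0, …, p 3` are the coordinates `x₀, …, x₃` above; all others enter through `∑ xᵢ²`. -/
noncomputable def homaloidalPoly : MvPolynomial σ K :=
  X (p 3) * X (p 0) ^ (e + 1) + X (p 1) ^ (e + 2)
    + X (p 0) ^ e * (X (p 1) * X (p 2) + ∑ i ∈ (univ.map p)ᶜ, X i ^ 2)

theorem isHomogeneous_homaloidalPoly : (homaloidalPoly (K := K) p e).IsHomogeneous (e + 2) := by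
  have hquad : (X (p 1) * X (p 2) + ∑ i ∈ (univ.map p)ᶜ, X i ^ 2 :
      MvPolynomial σ K).IsHomogeneous 2 :=
    ((isHomogeneous_X K (p 1)).mul (isHomogeneous_X K (p 2))).add
      (IsHomogeneous.sum _ _ _ fun i _ => isHomogeneous_X_pow i 2)
  have h3 : (X (p 3) * X (p 0) ^ (e + 1) : MvPolynomial σ K).IsHomogeneous (e + 2) := by
    simpa [add_comm, add_left_comm] using
      (isHomogeneous_X K (p 3)).mul (isHomogeneous_X_pow (p 0) (e + 1))
  exact (h3.add (isHomogeneous_X_pow _ _)).add ((isHomogeneous_X_pow _ _).mul hquad)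

theorem pderiv_three_homaloidalPoly :
    pderiv (p 3) (homaloidalPoly (K := K) p e) = X (p 0) ^ (e + 1) := by
  simp [homaloidalPoly, pderiv_X, Pi.single_apply]

variable {p e} {w : σ → K}

theorem eval_pderiv_zero_homaloidalPoly (hw : w (p 0) = 1) :
    eval w (pderiv (p 0) (homaloidalPoly p e)) =
      (e + 1) * w (p 3) + e * (w (p 1) * w (p 2) + ∑ i ∈ (univ.map p)ᶜ, w i ^ 2) := by
  simp [homaloidalPoly, pderiv_X, Pi.single_apply, hw, mul_comm]

theorem eval_pderiv_one_homaloidalPoly (hw : w (p 0) = 1) :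
    eval w (pderiv (p 1) (homaloidalPoly p e)) = (e + 2) * w (p 1) ^ (e + 1) + w (p 2) := by
  simp [homaloidalPoly, pderiv_X, Pi.single_apply, hw]

theorem eval_pderiv_two_homaloidalPoly (hw : w (p 0) = 1) :
    eval w (pderiv (p 2) (homaloidalPoly p e)) = w (p 1) := by
  simp [homaloidalPoly, pderiv_X, Pi.single_apply, hw]

theorem eval_pderiv_three_homaloidalPoly (hw : w (p 0) = 1) :
    eval w (pderiv (p 3) (homaloidalPoly p e)) = 1 := by
  simp [pderiv_three_homaloidalPoly, hw]

theorem eval_pderiv_homaloidalPoly_of_notMem_range {i : σ} (hi : i ∉ Set.range p)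
    (hw : w (p 0) = 1) :
    eval w (pderiv i (homaloidalPoly p e)) = 2 * w i := by
  simp only [Set.mem_range, not_exists] at hi
  simp [homaloidalPoly, pderiv_X, Pi.single_apply, hw, hi]

theorem mem_compl_map_univ_iff {i : σ} : i ∈ (univ.map p)ᶜ ↔ i ∉ Set.range p := by
  simp

variable (p e)

noncomputable def polarInverse (y : σ → K) : σ → K :=
  let u := (y (p 3))⁻¹ • y
  let w₁ := u (p 2)
  let w₂ := u (p 1) - (e + 2) * w₁ ^ (e + 1)
  let q := w₁ * w₂ + ∑ i ∈ (univ.map p)ᶜ, (u i / 2) ^ 2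
  Function.extend p ![1, w₁, w₂, (u (p 0) - e * q) / (e + 1)] fun i => u i / 2

variable {p e}

theorem polarInverse_apply_of_notMem_range (y : σ → K) {i : σ} (hi : i ∉ Set.range p) :
    polarInverse p e y i = (y (p 3))⁻¹ * y i / 2 := by
  unfold polarInverse
  exact Function.extend_apply' _ _ _ hi

theorem polarInverse_apply_zero (y : σ → K) : polarInverse p e y (p 0) = 1 := by
  unfold polarInverse
  exact p.injective.extend_apply _ _ _

theorem polarInverse_apply_one (y : σ → K) :
    polarInverse p e y (p 1) = (y (p 3))⁻¹ * y (p 2) := by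
  unfold polarInverse
  exact p.injective.extend_apply _ _ _

theorem polarInverse_apply_two (y : σ → K) :
    polarInverse p e y (p 2) =
      (y (p 3))⁻¹ * y (p 1) - (e + 2) * polarInverse p e y (p 1) ^ (e + 1) := by
  rw [polarInverse_apply_one]
  unfold polarInverse
  exact p.injective.extend_apply _ _ _

theorem polarInverse_apply_three (y : σ → K) :
    polarInverse p e y (p 3) = ((y (p 3))⁻¹ * y (p 0) - e * (polarInverse p e y (p 1) *
      polarInverse p e y (p 2) + ∑ i ∈ (univ.map p)ᶜ, polarInverse p e y i ^ 2)) / (e + 1) := by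
  rw [polarInverse_apply_two, polarInverse_apply_one, sum_congr rfl fun i hi => by
    rw [polarInverse_apply_of_notMem_range y (mem_compl_map_univ_iff.1 hi)]]
  unfold polarInverse
  exact p.injective.extend_apply _ _ _

theorem eval_pderiv_polarInverse [CharZero K] {y : σ → K} (hy : y (p 3) ≠ 0) :
    ∀ i, eval (polarInverse p e y) (pderiv i (homaloidalPoly p e)) = (y (p 3))⁻¹ * y i := by
  have hw := polarInverse_apply_zero (p := p) (e := e) y
  refine p.forall_fin_four_iff.2 ⟨?_, ?_, ?_, ?_, fun i hi => ?_⟩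
  · rw [eval_pderiv_zero_homaloidalPoly hw, polarInverse_apply_three]
    field_simp
    ring
  · rw [eval_pderiv_one_homaloidalPoly hw, polarInverse_apply_two]
    ring
  · rw [eval_pderiv_two_homaloidalPoly hw, polarInverse_apply_one]
  · rw [eval_pderiv_three_homaloidalPoly hw, inv_mul_cancel₀ hy]
  · rw [eval_pderiv_homaloidalPoly_of_notMem_range hi hw, polarInverse_apply_of_notMem_range y hi]
    ring

theorem eq_polarInverse_of_eval_pderiv [CharZero K] {y : σ → K}
    (hw : w (p 0) = 1) {c : K} (h : ∀ i, eval w (pderiv i (homaloidalPoly p e)) = c * y i) :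
    w = polarInverse p e y := by
  have hc : c = (y (p 3))⁻¹ := by
    have h3 := h (p 3)
    rw [eval_pderiv_three_homaloidalPoly hw] at h3
    exact eq_inv_of_mul_eq_one_left h3.symm
  subst hc
  have h1 : w (p 1) = polarInverse p e y (p 1) := by
    rw [polarInverse_apply_one, ← h (p 2), eval_pderiv_two_homaloidalPoly hw]
  have h2 : w (p 2) = polarInverse p e y (p 2) := by
    rw [polarInverse_apply_two, ← h (p 1), eval_pderiv_one_homaloidalPoly hw, ← h1]
    ring
  have hrest : ∀ i ∉ Set.range p, w i = polarInverse p e y i := fun i hi => by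
    rw [polarInverse_apply_of_notMem_range y hi, ← h i,
      eval_pderiv_homaloidalPoly_of_notMem_range hi hw]
    ring
  have h3 : w (p 3) = polarInverse p e y (p 3) := by
    rw [polarInverse_apply_three, ← h (p 0), eval_pderiv_zero_homaloidalPoly hw, ← h1, ← h2,
      sum_congr rfl fun i hi => by rw [hrest i (mem_compl_map_univ_iff.1 hi)]]
    field_simp
    ring
  exact funext_iff.2 <| p.forall_fin_four_iff.2
    ⟨hw.trans (polarInverse_apply_zero y).symm, h1, h2, h3, hrest⟩

variable (p e)

theorem squarefree_homaloidalPoly : Squarefree (homaloidalPoly (K := K) p e) := by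
  refine (pderiv (p 3)).squarefree_of_apply_eq_prime_pow X_prime
    (pderiv_three_homaloidalPoly p e) fun ⟨g, hg⟩ => ?_
  have hrest : ∑ i ∈ (univ.map p)ᶜ, (Pi.single (p 1) 1 : σ → K) i ^ 2 = 0 :=
    sum_eq_zero fun i hi => by
      rw [Pi.single_eq_of_ne fun h => mem_compl_map_univ_iff.1 hi ⟨1, h.symm⟩]
      ring
  simpa [homaloidalPoly, Pi.single_apply, hrest] using congrArg (eval (Pi.single (p 1) 1)) hg

end HomaloidalPoly

theorem polarMapVec_smul {n k : ℕ} {f : MvPolynomial (Fin (n + 1)) ℂ} (hf : f.IsHomogeneous k)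
    (t : ℂ) (v : Fin (n + 1) → ℂ) : polarMapVec f (t • v) = t ^ (k - 1) • polarMapVec f v :=
  funext fun _ => hf.pderiv.eval_smul t v

theorem hasPolarDegree_one_of_unique_preimage {n : ℕ} {f : MvPolynomial (Fin (n + 1)) ℂ}
    {U : Set (Fin (n + 1) → ℂ)} (hU : Dense U) (s : (Fin (n + 1) → ℂ) → Fin (n + 1) → ℂ)
    (hs : ∀ y ∈ U, s y ≠ 0 ∧ ∃ c : ℂ, c ≠ 0 ∧ polarMapVec f (s y) = c • y)
    (huniq : ∀ y ∈ U, ∀ v, ∀ c : ℂ, c ≠ 0 → polarMapVec f v = c • y → ∃ t : ℂ, t • s y = v) :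
    HasPolarDegree f 1 := by
  refine ⟨U, hU, fun y hy _ => ?_⟩
  obtain ⟨hs0, hsy⟩ := hs y hy
  suffices h : {x : ℙ ℂ (Fin (n + 1) → ℂ) | ∃ v, ∃ hv : v ≠ 0, Projectivization.mk ℂ v hv = x ∧
      ∃ c : ℂ, c ≠ 0 ∧ polarMapVec f v = c • y} = {Projectivization.mk ℂ (s y) hs0} by
    rw [h, Nat.card_unique]
  ext x
  constructor
  · rintro ⟨v, hv, rfl, c, hc, hvy⟩
    exact (Projectivization.mk_eq_mk_iff' ℂ _ _ hv hs0).2 (huniq y hy v c hc hvy)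
  · rintro rfl
    exact ⟨s y, hs0, rfl, hsy⟩

theorem hasPolarDegree_homaloidalPoly {n : ℕ} (p : Fin 4 ↪ Fin (n + 1)) (e : ℕ) :
    HasPolarDegree (homaloidalPoly p e) 1 := by
  refine hasPolarDegree_one_of_unique_preimage (dense_setOf_apply_ne_zero (p 3))
    (polarInverse p e) (fun y hy => ⟨fun h => ?_, _, inv_ne_zero hy, ?_⟩) fun y hy v c hc hv => ?_
  · simpa [h] using polarInverse_apply_zero (p := p) (e := e) y
  · ext i
    exact eval_pderiv_polarInverse hy i
  have ht : v (p 0) ≠ 0 := by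
    have h3 := congrFun hv (p 3)
    simp only [polarMapVec, pderiv_three_homaloidalPoly, map_pow, eval_X, Pi.smul_apply,
      smul_eq_mul] at h3
    exact fun h0 => mul_ne_zero hc hy (by rw [← h3, h0, zero_pow e.succ_ne_zero])
  have hw : ((v (p 0))⁻¹ • v) (p 0) = 1 := inv_mul_cancel₀ ht
  have hwv := polarMapVec_smul (isHomogeneous_homaloidalPoly p e) (v (p 0))⁻¹ v
  rw [hv, smul_smul] at hwv
  refine ⟨v (p 0), ?_⟩
  rw [← eq_polarInverse_of_eval_pderiv hw (congrFun hwv), smul_smul, mul_inv_cancel₀ ht, one_smul]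

/-- For every `n ≥ 3` and every `d ≥ 2` there exists a reduced
homaloidal hypersurface in `ℙⁿ` of degree `d`, i.e. a reduced hypersurface whose polar
map is birational (has topological degree 1). -/
theorem exists_reduced_homaloidal_hypersurface :
    ∀ n : ℕ, 3 ≤ n → ∀ d : ℕ, 2 ≤ d →
      ∃ f : MvPolynomial (Fin (n+1)) ℂ,
        f.IsHomogeneous d ∧ Squarefree f ∧ HasPolarDegree f 1 := by
  intro n hn d hd
  obtain ⟨e, rfl⟩ : ∃ e, d = e + 2 := ⟨d - 2, by omega⟩
  have p : Fin 4 ↪ Fin (n + 1) := Fin.castLEEmb (by omega)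
  exact ⟨homaloidalPoly p e, isHomogeneous_homaloidalPoly p e, squarefree_homaloidalPoly p e,
    hasPolarDegree_homaloidalPoly p e⟩
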